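/- Let Ω > 0, let T ∈ ℝ^{m×m} with ‖T‖∞ ≤ Ω, let X, Y ∈ ℝ^{m×n} with ‖X‖∞ ≤ Ω and ‖Y‖∞ ≤ Ω, and let α, β ∈ ℝ with 0 < α ≤ 1 and 0 < β ≤ 1. Set γ = min(α, β), s = (γ/β)·‖Y‖∞ + ‖T‖∞·((γ/α)·‖X‖∞), δ = min(1, Ω/s) if s > 0 and δ = 1 if s = 0, ζ = δ·γ, and Z = (δ·(γ/β))·Y - T·((δ·(γ/α))·X). Then 0 < ζ ≤ 1, ‖Z‖∞ ≤ Ω, and ζ⁻¹·Z = β⁻¹·Y - T·(α⁻¹·X). -/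

import Mathlib

/-!
Rescaling by `γ = min(α, β)` brings both operands to the common scaling factor `γ`, and `δ` is the
overflow protection: the triangle inequality and submultiplicativity give `‖Z‖∞ ≤ δ s`, which
`δ ≤ Ω / s` bounds by `Ω`. The factors `δ γ` cancel exactly in `ζ⁻¹ Z`.
-/

open Matrix

attribute [local instance] Matrix.linftyOpNormedAddCommGroup
attribute [local instance] Matrix.linftyOpNormSMulClass

/-- The scaling factor of `ProtectUpdate` for an update whose norm is bounded by `s`. -/
noncomputable def protectUpdateScale (Ω s : ℝ) : ℝ :=
  if 0 < s then min 1 (Ω / s) else 1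

section ProtectUpdate

variable {Ω s : ℝ}

theorem protectUpdateScale_pos (hΩ : 0 < Ω) : 0 < protectUpdateScale Ω s := by
  unfold protectUpdateScale
  split_ifs with hs
  · exact lt_min one_pos (div_pos hΩ hs)
  · exact one_pos

theorem protectUpdateScale_le_one : protectUpdateScale Ω s ≤ 1 := by
  unfold protectUpdateScale
  split_ifs
  · exact min_le_left _ _
  · exact le_rfl

theorem protectUpdateScale_mul_le (hΩ : 0 ≤ Ω) (hs : 0 ≤ s) :
    protectUpdateScale Ω s * s ≤ Ω := by
  rcases hs.lt_or_eq with hs | rfl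
  · calc protectUpdateScale Ω s * s ≤ Ω / s * s := by
          gcongr
          rw [protectUpdateScale, if_pos hs]
          exact min_le_right _ _
      _ = Ω := div_mul_cancel₀ _ hs.ne'
  · simpa using hΩ

end ProtectUpdate

section LeftUpdate

variable {l m n : Type*}

theorem linfty_opNorm_smul_sub_mul_smul_le [Fintype l] [Fintype m] [Fintype n] {a b : ℝ}
    (ha : 0 ≤ a) (hb : 0 ≤ b) (T : Matrix l m ℝ) (X : Matrix m n ℝ) (Y : Matrix l n ℝ) :
    ‖a • Y - T * (b • X)‖ ≤ a * ‖Y‖ + ‖T‖ * (b * ‖X‖) :=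
  calc ‖a • Y - T * (b • X)‖ ≤ ‖a • Y‖ + ‖T * (b • X)‖ := norm_sub_le _ _
    _ ≤ ‖a • Y‖ + ‖T‖ * ‖b • X‖ := by gcongr; exact linfty_opNorm_mul _ _
    _ = a * ‖Y‖ + ‖T‖ * (b * ‖X‖) := by
      rw [norm_smul, norm_smul, Real.norm_of_nonneg ha, Real.norm_of_nonneg hb]

theorem smul_smul_sub_mul_smul {R : Type*} [CommRing R] [Fintype m] (c a b : R)
    (T : Matrix l m R) (X : Matrix m n R) (Y : Matrix l n R) :
    c • (a • Y - T * (b • X)) = (c * a) • Y - T * ((c * b) • X) := by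
  rw [smul_sub, smul_smul, Matrix.mul_smul, Matrix.mul_smul, smul_smul]

end LeftUpdate

theorem robust_left_update_correct_general
    {m n : ℕ} (Ω : ℝ) (hΩ : 0 < Ω)
    (T : Matrix (Fin m) (Fin m) ℝ) (X Y : Matrix (Fin m) (Fin n) ℝ)
    (α β : ℝ) (hα0 : 0 < α) (hα1 : α ≤ 1) (hβ0 : 0 < β)
    (γ : ℝ) (hγ : γ = min α β)
    (s : ℝ) (hs : s = (γ / β) * ‖Y‖ + ‖T‖ * ((γ / α) * ‖X‖))
    (δ : ℝ) (hδ : δ = if 0 < s then min 1 (Ω / s) else 1)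
    (ζ : ℝ) (hζ : ζ = δ * γ)
    (Z : Matrix (Fin m) (Fin n) ℝ) (hZ : Z = (δ * (γ / β)) • Y - T * ((δ * (γ / α)) • X)) :
    (0 < ζ ∧ ζ ≤ 1) ∧ ‖Z‖ ≤ Ω ∧ ζ⁻¹ • Z = β⁻¹ • Y - T * (α⁻¹ • X) := by
  change δ = protectUpdateScale Ω s at hδ
  have hγ0 : 0 < γ := hγ ▸ lt_min hα0 hβ0
  have hγ1 : γ ≤ 1 := hγ ▸ (min_le_left α β).trans hα1
  have hδ0 : 0 < δ := hδ ▸ protectUpdateScale_pos hΩ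
  have hδ1 : δ ≤ 1 := hδ ▸ protectUpdateScale_le_one
  have hs0 : 0 ≤ s := by rw [hs]; positivity
  have hZs : ‖Z‖ ≤ δ * s :=
    calc ‖Z‖ ≤ δ * (γ / β) * ‖Y‖ + ‖T‖ * (δ * (γ / α) * ‖X‖) :=
          hZ ▸ linfty_opNorm_smul_sub_mul_smul_le (by positivity) (by positivity) T X Y
      _ = δ * s := by rw [hs]; ring
  refine ⟨⟨hζ ▸ mul_pos hδ0 hγ0, hζ ▸ mul_le_one₀ hδ1 hγ0.le hγ1⟩,
    hZs.trans (hδ ▸ protectUpdateScale_mul_le hΩ.le hs0), ?_⟩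
  rw [hZ, hζ, smul_smul_sub_mul_smul]
  congr 3 <;> field_simp

/-- Robust left update (Algorithm 3): with `‖T‖∞, ‖X‖∞, ‖Y‖∞ ≤ Ω`,
scaling factors `0 < α, β ≤ 1`, `γ = min(α,β)`, `δ` the `ProtectUpdate` scaling for
`s = (γ/β)‖Y‖∞ + ‖T‖∞ ((γ/α)‖X‖∞)`, `ζ = δ γ` and
`Z = (δ (γ/β)) Y - T ((δ (γ/α)) X)`, we get `0 < ζ ≤ 1`, `‖Z‖∞ ≤ Ω` and
`ζ⁻¹ Z = β⁻¹ Y - T (α⁻¹ X)`. -/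
theorem robust_left_update_correct
    {m n : ℕ} (Ω : ℝ) (hΩ : 0 < Ω)
    (T : Matrix (Fin m) (Fin m) ℝ) (X Y : Matrix (Fin m) (Fin n) ℝ)
    (hT : ‖T‖ ≤ Ω) (hX : ‖X‖ ≤ Ω) (hY : ‖Y‖ ≤ Ω)
    (α β : ℝ) (hα0 : 0 < α) (hα1 : α ≤ 1) (hβ0 : 0 < β) (hβ1 : β ≤ 1)
    (γ : ℝ) (hγ : γ = min α β)
    (s : ℝ) (hs : s = (γ / β) * ‖Y‖ + ‖T‖ * ((γ / α) * ‖X‖))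
    (δ : ℝ) (hδ : δ = if 0 < s then min 1 (Ω / s) else 1)
    (ζ : ℝ) (hζ : ζ = δ * γ)
    (Z : Matrix (Fin m) (Fin n) ℝ) (hZ : Z = (δ * (γ / β)) • Y - T * ((δ * (γ / α)) • X)) :
    (0 < ζ ∧ ζ ≤ 1) ∧ ‖Z‖ ≤ Ω ∧ ζ⁻¹ • Z = β⁻¹ • Y - T * (α⁻¹ • X) :=
  robust_left_update_correct_general Ω hΩ T X Y α β hα0 hα1 hβ0 γ hγ s hs δ hδ ζ hζ Z hZ
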